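/- arXiv:2006.14126 — 2 statements merged into one kernel-verified Lean document; each statement's English description precedes it below -/
import Mathlib

section
/- Let ‖·‖ be a norm on a vector space of signed measures, and suppose the map θ ↦ μ_θ satisfies: (a) ‖μ_{θ} − μ_⋆ − ⟨θ − θ_⋆, ξ̇⟩‖ = o(‖θ − θ_⋆‖) as θ → θ_⋆; (b) there exist constants 0 < C₁ ≤ C₂ with C₁‖t‖ ≤ ‖⟨t, ξ̇⟩‖ ≤ C₂‖t‖ for all t. If an estimator θ̂_n satisfies ‖μ_{θ̂_n} − μ̂_n‖ ≤ inf_θ ‖μ_θ − μ̂_n‖ + o_p(n^{-1/2}), θ̂_n → θ_⋆ in probability, and ‖μ̂_n − μ_⋆‖ = O_p(n^{-1/2}), then √n‖θ̂_n − θ_⋆‖ = O_p(1). -/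
open MeasureTheory Filter

/-- `Xₙ → 0` in probability. -/
def TendstoInProbZero {Ω : Type*} [MeasurableSpace Ω] (P : Measure Ω)
    (X : ℕ → Ω → ℝ) : Prop :=
  ∀ ε > (0 : ℝ), Tendsto (fun n => P {ω | ε < |X n ω|}) atTop (nhds 0)

/-- `Xₙ = O_p(1)`: bounded in probability. -/
def BoundedInProb {Ω : Type*} [MeasurableSpace Ω] (P : Measure Ω)
    (X : ℕ → Ω → ℝ) : Prop :=
  ∀ ε > (0 : ℝ), ∃ M > (0 : ℝ), ∀ᶠ n in atTop, P {ω | M < |X n ω|} < ENNReal.ofReal ε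

/-- √n-consistency of near-minimizers of a minimum distance criterion.
Under norm differentiability of `θ ↦ μ_θ` at `θ⋆` with nondegenerate derivative `ξ̇`,
consistency of the near-minimizer `θ̂ₙ`, and `‖μ̂ₙ − μ⋆‖ = O_p(n^{-1/2})`,
one has `√n ‖θ̂ₙ − θ⋆‖ = O_p(1)`. -/
theorem sqrt_n_consistency_min_distance
    {Ω : Type*} [MeasurableSpace Ω] (P : Measure Ω) [IsProbabilityMeasure P]
    {V : Type*} [NormedAddCommGroup V] [NormedSpace ℝ V]
    {d : ℕ} (μmap : EuclideanSpace ℝ (Fin d) → V)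
    (θstar : EuclideanSpace ℝ (Fin d)) (ξ : Fin d → V)
    (hdiff : ∀ ε > (0 : ℝ), ∃ δ > (0 : ℝ), ∀ θ, ‖θ - θstar‖ ≤ δ →
      ‖μmap θ - μmap θstar - ∑ i, (θ - θstar) i • ξ i‖ ≤ ε * ‖θ - θstar‖)
    (C₁ C₂ : ℝ) (hC₁ : 0 < C₁) (hC₁₂ : C₁ ≤ C₂)
    (hlow : ∀ t : EuclideanSpace ℝ (Fin d), C₁ * ‖t‖ ≤ ‖∑ i, t i • ξ i‖)
    (hupp : ∀ t : EuclideanSpace ℝ (Fin d), ‖∑ i, t i • ξ i‖ ≤ C₂ * ‖t‖)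
    (μhat : ℕ → Ω → V) (θhat : ℕ → Ω → EuclideanSpace ℝ (Fin d))
    (R : ℕ → Ω → ℝ)
    (hnear : ∀ n ω, ‖μmap (θhat n ω) - μhat n ω‖ ≤
      (⨅ θ : EuclideanSpace ℝ (Fin d), ‖μmap θ - μhat n ω‖) + R n ω)
    (hRop : TendstoInProbZero P (fun n ω => Real.sqrt n * R n ω))
    (hcons : TendstoInProbZero P (fun n ω => ‖θhat n ω - θstar‖))
    (hOp : BoundedInProb P (fun n ω => Real.sqrt n * ‖μhat n ω - μmap θstar‖)) :
    BoundedInProb P (fun n ω => Real.sqrt n * ‖θhat n ω - θstar‖) := by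
  intro ε hε
  obtain ⟨δ, hδ, hdd⟩ := hdiff (C₁ / 2) (by positivity)
  obtain ⟨M₀, hM₀, hB⟩ := hOp (ε / 3) (by positivity)
  have hc3 : (0 : ENNReal) < ENNReal.ofReal (ε / 3) :=
    ENNReal.ofReal_pos.mpr (by positivity)
  refine ⟨4 / C₁ * M₀ + 2 / C₁, by positivity, ?_⟩
  have hRsmall := (hRop 1 one_pos).eventually (Iio_mem_nhds hc3)
  have hCsmall := (hcons δ hδ).eventually (Iio_mem_nhds hc3)
  filter_upwards [hB, hRsmall, hCsmall] with n hB hR hC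
  set M := 4 / C₁ * M₀ + 2 / C₁ with hMdef
  have hsub : {ω | M < |Real.sqrt n * ‖θhat n ω - θstar‖|} ⊆
      {ω | δ < |‖θhat n ω - θstar‖|} ∪
      ({ω | M₀ < |Real.sqrt n * ‖μhat n ω - μmap θstar‖|} ∪
       {ω | 1 < |Real.sqrt n * R n ω|}) := by
    intro ω hω
    by_contra hcon
    simp only [Set.mem_union, Set.mem_setOf_eq] at hcon
    push_neg at hcon
    obtain ⟨h1, h2, h3⟩ := hcon
    simp only [Set.mem_setOf_eq] at hω h1 h2 h3
    have hs : (0:ℝ) ≤ Real.sqrt n := Real.sqrt_nonneg _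
    set t : EuclideanSpace ℝ (Fin d) := θhat n ω - θstar with ht
    have htd : ‖t‖ ≤ δ := le_trans (le_abs_self _) h1
    -- lower bound on ‖μmap θ̂ − μ⋆‖
    have hlb : C₁ / 2 * ‖t‖ ≤ ‖μmap (θhat n ω) - μmap θstar‖ := by
      have h4 := hdd (θhat n ω) htd
      rw [← ht] at h4
      have h5 := hlow t
      have htri : ‖∑ i, t i • ξ i‖ - ‖μmap (θhat n ω) - μmap θstar - ∑ i, t i • ξ i‖
          ≤ ‖μmap (θhat n ω) - μmap θstar‖ := by
        have heq : μmap (θhat n ω) - μmap θstar -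
            (μmap (θhat n ω) - μmap θstar - ∑ i, t i • ξ i) = ∑ i, t i • ξ i := by
          abel
        have := norm_sub_le (μmap (θhat n ω) - μmap θstar)
          (μmap (θhat n ω) - μmap θstar - ∑ i, t i • ξ i)
        rw [heq] at this
        linarith
      have h4' : ‖μmap (θhat n ω) - μmap θstar - ∑ i, t i • ξ i‖ ≤ C₁ / 2 * ‖t‖ := h4
      linarith
    -- upper bound
    have hinf : (⨅ θ : EuclideanSpace ℝ (Fin d), ‖μmap θ - μhat n ω‖) ≤
        ‖μmap θstar - μhat n ω‖ :=
      ciInf_le ⟨0, fun x ⟨θ, hθ⟩ => hθ ▸ norm_nonneg _⟩ θstar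
    have hub : ‖μmap (θhat n ω) - μmap θstar‖ ≤
        2 * ‖μhat n ω - μmap θstar‖ + R n ω := by
      have htr : ‖μmap (θhat n ω) - μmap θstar‖ ≤
          ‖μmap (θhat n ω) - μhat n ω‖ + ‖μhat n ω - μmap θstar‖ := by
        have := norm_sub_le_norm_sub_add_norm_sub (μmap (θhat n ω)) (μhat n ω) (μmap θstar)
        linarith
      have h6 := hnear n ω
      have h7 : ‖μmap θstar - μhat n ω‖ = ‖μhat n ω - μmap θstar‖ := norm_sub_rev _ _
      linarith
    -- combine with √n
    have key : C₁ / 2 * (Real.sqrt n * ‖t‖) ≤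
        2 * (Real.sqrt n * ‖μhat n ω - μmap θstar‖) + Real.sqrt n * R n ω := by
      have := mul_le_mul_of_nonneg_left hub hs
      have hR' : Real.sqrt n * (2 * ‖μhat n ω - μmap θstar‖ + R n ω)
          = 2 * (Real.sqrt n * ‖μhat n ω - μmap θstar‖) + Real.sqrt n * R n ω := by ring
      have hL : Real.sqrt n * (C₁ / 2 * ‖t‖) = C₁ / 2 * (Real.sqrt n * ‖t‖) := by ring
      calc C₁ / 2 * (Real.sqrt n * ‖t‖) = Real.sqrt n * (C₁ / 2 * ‖t‖) := by ring
        _ ≤ Real.sqrt n * (2 * ‖μhat n ω - μmap θstar‖ + R n ω) :=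
            mul_le_mul_of_nonneg_left (hlb.trans hub) hs
        _ = _ := hR'
    have h2' : Real.sqrt n * ‖μhat n ω - μmap θstar‖ ≤ M₀ := by
      have : Real.sqrt n * ‖μhat n ω - μmap θstar‖ ≤
          |Real.sqrt n * ‖μhat n ω - μmap θstar‖| := le_abs_self _
      linarith
    have h3' : Real.sqrt n * R n ω ≤ 1 := le_trans (le_abs_self _) h3
    have hfin : Real.sqrt n * ‖t‖ ≤ M := by
      have h8 : C₁ / 2 * (Real.sqrt n * ‖t‖) ≤ 2 * M₀ + 1 := by linarith
      have h9 : Real.sqrt n * ‖t‖ ≤ (2 * M₀ + 1) * (2 / C₁) := by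
        rw [← le_div_iff₀' (by positivity)] at h8
        calc Real.sqrt n * ‖t‖ ≤ (2 * M₀ + 1) / (C₁ / 2) := h8
          _ = (2 * M₀ + 1) * (2 / C₁) := by field_simp
      have hEq : (2 * M₀ + 1) * (2 / C₁) = M := by rw [hMdef]; ring
      exact h9.trans (le_of_eq hEq)
    rw [abs_of_nonneg (by positivity : (0:ℝ) ≤ Real.sqrt n * ‖t‖)] at hω
    exact absurd hfin (not_le.mpr hω)
  calc P {ω | M < |Real.sqrt n * ‖θhat n ω - θstar‖|}
      ≤ P ({ω | δ < |‖θhat n ω - θstar‖|} ∪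
          ({ω | M₀ < |Real.sqrt n * ‖μhat n ω - μmap θstar‖|} ∪
           {ω | 1 < |Real.sqrt n * R n ω|})) := measure_mono hsub
    _ ≤ P {ω | δ < |‖θhat n ω - θstar‖|} +
        (P {ω | M₀ < |Real.sqrt n * ‖μhat n ω - μmap θstar‖|} +
         P {ω | 1 < |Real.sqrt n * R n ω|}) :=
        le_trans (measure_union_le _ _) (by gcongr; exact measure_union_le _ _)
    _ < ENNReal.ofReal (ε / 3) + (ENNReal.ofReal (ε / 3) + ENNReal.ofReal (ε / 3)) :=
        ENNReal.add_lt_add hC (ENNReal.add_lt_add hB hR)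
    _ = ENNReal.ofReal ε := by
        rw [← ENNReal.ofReal_add (by positivity) (by positivity),
          ← ENNReal.ofReal_add (by positivity) (by positivity)]
        ring_nf
end

section
/- Let T be a functional on probability measures that is Fisher consistent along simple perturbations: √n[T(μ_{θ_⋆+t/√n, ζ_n}) − θ_⋆] = t + o(1) for every t. Suppose τ: Θ → ℝ has bounded derivative and that n·H²(μ_{θ_n,ζ_n}, μ_⋆) → (1/8) tᵀ H_⋆ t with H_⋆ positive definite. Then liminf_n sup_{Q ∈ B_H(μ_⋆, r/√n)} n(τ∘T(Q) − τ(θ_⋆))² ≥ 8 r² (dτ(θ_⋆)/dθ) H_⋆^{-1} (dτ(θ_⋆)/dθ)ᵀ. -/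
/-!
Along the simple perturbation `μ_{t,n}`, Fisher consistency and the delta method give
`n (τ(T μ_{t,n}) - τ(θ⋆))² → (a ⬝ᵥ t)²`, while `n H²(μ_{t,n}, μ⋆) → tᵀH⋆t / 8` puts `μ_{t,n}`
eventually inside the ball `B_H(μ⋆, r/√n)` as soon as `tᵀH⋆t < 8r²`. Hence the liminf of the
maximal bias is at least `(a ⬝ᵥ t)²` for every such `t`, and maximizing `(a ⬝ᵥ t)²` over the
ellipsoid, attained at `t ∝ H⋆⁻¹a`, gives `8r² aᵀH⋆⁻¹a`.
-/

open MeasureTheory Filter Matrix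

/-- The Hellinger distance between two measures, computed with the dominating measure
`μ + ν`. -/
noncomputable def hellingerDist {Y : Type*} [MeasurableSpace Y]
    (μ ν : Measure Y) : ℝ :=
  Real.sqrt (∫ y, (Real.sqrt ((μ.rnDeriv (μ + ν)) y).toReal
      - Real.sqrt ((ν.rnDeriv (μ + ν)) y).toReal) ^ 2 ∂(μ + ν))

theorem HasFDerivAt.tendsto_smul_sub {E F : Type*} [NormedAddCommGroup E] [NormedSpace ℝ E]
    [NormedAddCommGroup F] [NormedSpace ℝ F] {f : E → F} {f' : E →L[ℝ] F} {x v : E}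
    {α : Type*} {l : Filter α} {c : α → ℝ} {y : α → E} (hf : HasFDerivAt f f' x)
    (hc : Tendsto (fun n => ‖c n‖) l atTop) (hy : Tendsto (fun n => c n • (y n - x)) l (nhds v)) :
    Tendsto (fun n => c n • (f (y n) - f x)) l (nhds (f' v)) := by
  simpa using hf.hasFDerivWithinAt.lim (tangentConeAt.lim_zero l hc hy)
    (.of_forall fun _ => Set.mem_univ _) hy

theorem HasFDerivAt.tendsto_natCast_mul_sq_sub {E : Type*} [NormedAddCommGroup E]
    [NormedSpace ℝ E] {f : E → ℝ} {f' : E →L[ℝ] ℝ} {x v : E} {y : ℕ → E}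
    (hf : HasFDerivAt f f' x)
    (hy : Tendsto (fun n : ℕ => Real.sqrt n • (y n - x)) atTop (nhds v)) :
    Tendsto (fun n : ℕ => (n : ℝ) * (f (y n) - f x) ^ 2) atTop (nhds (f' v ^ 2)) := by
  have hc : Tendsto (fun n : ℕ => ‖Real.sqrt n‖) atTop atTop :=
    tendsto_norm_atTop_atTop.comp (Real.tendsto_sqrt_atTop.comp tendsto_natCast_atTop_atTop)
  convert ((hf.tendsto_smul_sub hc hy).pow 2) using 2 with n
  rw [smul_eq_mul, mul_pow, Real.sq_sqrt n.cast_nonneg]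

theorem Real.eventually_le_div_sqrt_of_tendsto {u : ℕ → ℝ} {q r : ℝ} (hu0 : ∀ n, 0 ≤ u n)
    (hr : 0 ≤ r) (hu : Tendsto (fun n : ℕ => (n : ℝ) * u n ^ 2) atTop (nhds q)) (hq : q < r ^ 2) :
    ∀ᶠ n : ℕ in atTop, u n ≤ r / Real.sqrt n := by
  filter_upwards [hu.eventually_lt_const hq, eventually_gt_atTop 0] with n hn hn0
  have hsqrt : 0 < Real.sqrt n := Real.sqrt_pos.mpr (by exact_mod_cast hn0)
  rw [le_div_iff₀ hsqrt, ← Real.sqrt_sq (mul_nonneg (hu0 n) hsqrt.le), ← Real.sqrt_sq hr]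
  refine Real.sqrt_le_sqrt ?_
  rw [mul_pow, Real.sq_sqrt n.cast_nonneg]
  linarith

theorem le_liminf_biSup_of_eventually_mem {α β ι : Type*} [CompleteLinearOrder β]
    [TopologicalSpace β] [OrderTopology β] {l : Filter ι} [l.NeBot] {f : ι → α → β}
    {S : ι → Set α} {x : ι → α} {c : β} (hx : ∀ᶠ n in l, x n ∈ S n)
    (hf : Tendsto (fun n => f n (x n)) l (nhds c)) :
    c ≤ liminf (fun n => ⨆ y ∈ S n, f n y) l := by
  rw [← hf.liminf_eq]
  exact liminf_le_liminf (hx.mono fun n hn => le_biSup (f n) hn)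

theorem Matrix.exists_dotProduct_mulVec_le_and_sq_ge {n : Type*} [Fintype n] [DecidableEq n]
    {H : Matrix n n ℝ} (hH : IsUnit H) (a : n → ℝ) {q : ℝ} (hq : 0 ≤ q) :
    ∃ t, t ⬝ᵥ H *ᵥ t ≤ q ∧ q * (a ⬝ᵥ H⁻¹ *ᵥ a) ≤ (a ⬝ᵥ t) ^ 2 := by
  set g := a ⬝ᵥ H⁻¹ *ᵥ a
  rcases le_or_gt g 0 with hg | hg
  · exact ⟨0, by simpa using hq, by simpa using mul_nonpos_of_nonneg_of_nonpos hq hg⟩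
  -- the maximiser of `a ⬝ᵥ t` on the ellipsoid `t ⬝ᵥ H *ᵥ t = q`
  set α := Real.sqrt (q / g)
  have hα : α ^ 2 = q / g := Real.sq_sqrt (div_nonneg hq hg.le)
  have hHt : H *ᵥ (α • H⁻¹ *ᵥ a) = α • a := by
    rw [mulVec_smul, mulVec_mulVec, mul_nonsing_inv _ ((isUnit_iff_isUnit_det H).mp hH),
      one_mulVec]
  have hat : a ⬝ᵥ (α • H⁻¹ *ᵥ a) = α * g := by rw [dotProduct_smul, smul_eq_mul]
  refine ⟨α • H⁻¹ *ᵥ a, le_of_eq ?_, le_of_eq ?_⟩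
  · rw [hHt, dotProduct_smul, dotProduct_comm _ a, hat, smul_eq_mul, ← mul_assoc, ← sq, hα]
    field_simp
  · rw [hat, mul_pow, hα]
    field_simp

theorem ENNReal.ofReal_le_of_forall_lt_one {x : ℝ} {L : ENNReal}
    (h : ∀ s ∈ Set.Ioo (0 : ℝ) 1, ENNReal.ofReal (s * x) ≤ L) : ENNReal.ofReal x ≤ L := by
  have hlim : Tendsto (fun s : ℝ => ENNReal.ofReal (s * x)) (nhdsWithin 1 (Set.Iio 1))
      (nhds (ENNReal.ofReal x)) := by
    have hcont : Continuous fun s : ℝ => ENNReal.ofReal (s * x) :=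
      ENNReal.continuous_ofReal.comp (continuous_mul_const x)
    simpa using (hcont.tendsto 1).mono_left nhdsWithin_le_nhds
  exact le_of_tendsto hlim (eventually_of_mem (Ioo_mem_nhdsLT zero_lt_one) h)

theorem bias_lower_bound_hellinger_general
    {Y : Type*} [MeasurableSpace Y]
    (μstar : Measure Y)
    {d : ℕ} (θstar : Fin d → ℝ) (T : Measure Y → (Fin d → ℝ))
    (μpert : (Fin d → ℝ) → ℕ → Measure Y)
    (hpert : ∀ t n, IsProbabilityMeasure (μpert t n))
    (hFisher : ∀ t : Fin d → ℝ,
      Tendsto (fun n : ℕ => Real.sqrt n • (T (μpert t n) - θstar)) atTop (nhds t))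
    (Hstar : Matrix (Fin d) (Fin d) ℝ) (hH : Hstar.PosDef)
    (hHell : ∀ t : Fin d → ℝ,
      Tendsto (fun n : ℕ => (n : ℝ) * hellingerDist (μpert t n) μstar ^ 2) atTop
        (nhds ((1 / 8) * (t ⬝ᵥ Hstar *ᵥ t))))
    (τ : (Fin d → ℝ) → ℝ) (a : Fin d → ℝ)
    (hτdiff : Differentiable ℝ τ)
    (ha : ∀ s, fderiv ℝ τ θstar s = a ⬝ᵥ s)
    (r : ℝ) (hr : 0 < r) :
    ENNReal.ofReal (8 * r ^ 2 * (a ⬝ᵥ Hstar⁻¹ *ᵥ a)) ≤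
      Filter.liminf (fun n : ℕ =>
        ⨆ Q ∈ {Q : Measure Y | IsProbabilityMeasure Q ∧
            hellingerDist Q μstar ≤ r / Real.sqrt n},
          ENNReal.ofReal ((n : ℝ) * (τ (T Q) - τ θstar) ^ 2)) atTop := by
  refine ENNReal.ofReal_le_of_forall_lt_one fun s ⟨hs0, hs1⟩ => ?_
  obtain ⟨t, htH, hat⟩ :=
    exists_dotProduct_mulVec_le_and_sq_ge hH.isUnit a (q := 8 * r ^ 2 * s) (by positivity)
  have ht : t ⬝ᵥ Hstar *ᵥ t < 8 * r ^ 2 :=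
    htH.trans_lt (mul_lt_of_lt_one_right (by positivity) hs1)
  have hball : ∀ᶠ n : ℕ in atTop, hellingerDist (μpert t n) μstar ≤ r / Real.sqrt n :=
    Real.eventually_le_div_sqrt_of_tendsto (fun _ => Real.sqrt_nonneg _) hr.le (hHell t)
      (by linarith)
  have hbias := (hτdiff θstar).hasFDerivAt.tendsto_natCast_mul_sq_sub (hFisher t)
  rw [ha t] at hbias
  calc ENNReal.ofReal (s * (8 * r ^ 2 * (a ⬝ᵥ Hstar⁻¹ *ᵥ a)))
      ≤ ENNReal.ofReal ((a ⬝ᵥ t) ^ 2) := ENNReal.ofReal_le_ofReal (by linarith)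
    _ ≤ _ := by
      refine le_liminf_biSup_of_eventually_mem ?_ (ENNReal.tendsto_ofReal hbias)
      exact hball.mono fun n hn => ⟨hpert t n, hn⟩

/-- Lower bound on the maximal asymptotic bias over shrinking Hellinger
neighborhoods.  If `T` is Fisher consistent along simple perturbations whose Hellinger
distance satisfies `n·H²(μ_{t,n}, μ⋆) → (1/8) tᵀH⋆t`, and `τ` has bounded derivative
`a = dτ(θ⋆)/dθ`, then
`liminfₙ sup_{Q ∈ B_H(μ⋆, r/√n)} n(τ∘T(Q) − τ(θ⋆))² ≥ 8 r² aᵀH⋆⁻¹a`. -/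
theorem bias_lower_bound_hellinger
    {Y : Type*} [MeasurableSpace Y]
    (μstar : Measure Y) [IsProbabilityMeasure μstar]
    {d : ℕ} (θstar : Fin d → ℝ) (T : Measure Y → (Fin d → ℝ))
    (μpert : (Fin d → ℝ) → ℕ → Measure Y)
    (hpert : ∀ t n, IsProbabilityMeasure (μpert t n))
    (hFisher : ∀ t : Fin d → ℝ,
      Tendsto (fun n : ℕ => Real.sqrt n • (T (μpert t n) - θstar)) atTop (nhds t))
    (Hstar : Matrix (Fin d) (Fin d) ℝ) (hH : Hstar.PosDef)
    (hHell : ∀ t : Fin d → ℝ,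
      Tendsto (fun n : ℕ => (n : ℝ) * hellingerDist (μpert t n) μstar ^ 2) atTop
        (nhds ((1 / 8) * (t ⬝ᵥ Hstar *ᵥ t))))
    (τ : (Fin d → ℝ) → ℝ) (a : Fin d → ℝ) (K : ℝ)
    (hτdiff : Differentiable ℝ τ) (hτbdd : ∀ θ, ‖fderiv ℝ τ θ‖ ≤ K)
    (ha : ∀ s, fderiv ℝ τ θstar s = a ⬝ᵥ s)
    (r : ℝ) (hr : 0 < r) :
    ENNReal.ofReal (8 * r ^ 2 * (a ⬝ᵥ Hstar⁻¹ *ᵥ a)) ≤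
      Filter.liminf (fun n : ℕ =>
        ⨆ Q ∈ {Q : Measure Y | IsProbabilityMeasure Q ∧
            hellingerDist Q μstar ≤ r / Real.sqrt n},
          ENNReal.ofReal ((n : ℝ) * (τ (T Q) - τ θstar) ^ 2)) atTop :=
  bias_lower_bound_hellinger_general μstar θstar T μpert hpert hFisher Hstar hH hHell τ a hτdiff ha
    r hr
end
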